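/- arXiv:1201.3593 — 2 statements merged into one kernel-verified Lean document; each statement's English description precedes it below -/
import Mathlib

section
/- Under the hypotheses of the previous setup (convex program, Lagrangian L with multipliers satisfying |λ_i| < ρ and 0 ≤ μ_j < ρ, stationarity ∇L(y) = 0, complementary slackness μ_j h_j(y) = 0, and y feasible), the point y is a global minimizer of the exact penalty surrogate E_ρ, and every global minimizer of E_ρ is a solution of the constrained program. -/
/-!
Under |λᵢ| ≤ ρ and 0 ≤ μⱼ ≤ ρ the Lagrangian L is a minorant of the penalty function E_ρ, and
the two agree at the feasible point y by complementary slackness. L is convex with a critical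
point at y, hence minimized there, so y also minimizes E_ρ. At any other minimizer z the chain
E_ρ z ≤ E_ρ y = L y ≤ L z ≤ E_ρ z forces L z = E_ρ z, and the strict bounds on the multipliers
allow this only when every constraint holds at z. On the feasible set E_ρ coincides with f.
-/

open Set

theorem ConvexOn.fun_sum {𝕜 E β ι : Type*} [Semiring 𝕜] [PartialOrder 𝕜] [AddCommMonoid E]
    [AddCommMonoid β] [PartialOrder β] [IsOrderedAddMonoid β] [SMul 𝕜 E] [Module 𝕜 β]
    {s : Set E} (hs : Convex 𝕜 s) {t : Finset ι} {f : ι → E → β}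
    (hf : ∀ i ∈ t, ConvexOn 𝕜 s (f i)) : ConvexOn 𝕜 s fun x => ∑ i ∈ t, f i x := by
  classical
  induction t using Finset.induction_on with
  | empty => simpa using convexOn_const (0 : β) hs
  | insert a t ha ih =>
    simp only [Finset.sum_insert ha]
    exact (hf a (Finset.mem_insert_self a t)).add
      (ih fun i hi => hf i (Finset.mem_insert_of_mem hi))

theorem AffineMap.convexOn {𝕜 E β : Type*} [Ring 𝕜] [PartialOrder 𝕜] [AddCommGroup E]
    [Module 𝕜 E] [AddCommGroup β] [PartialOrder β] [IsOrderedAddMonoid β] [Module 𝕜 β]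
    (φ : E →ᵃ[𝕜] β) {s : Set E} (hs : Convex 𝕜 s) : ConvexOn 𝕜 s φ := by
  rw [φ.decomp]
  exact (φ.linear.convexOn hs).add_const (φ 0)

theorem AffineMap.differentiable_of_finiteDimensional {𝕜 E F : Type*} [NontriviallyNormedField 𝕜]
    [CompleteSpace 𝕜] [NormedAddCommGroup E] [NormedSpace 𝕜 E] [FiniteDimensional 𝕜 E]
    [NormedAddCommGroup F] [NormedSpace 𝕜 F] (φ : E →ᵃ[𝕜] F) : Differentiable 𝕜 φ := by
  rw [φ.decomp]
  exact (LinearMap.toContinuousLinearMap φ.linear).differentiable.add_const (φ 0)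

theorem ConvexOn.le_of_hasFDerivAt_eq_zero {E : Type*} [NormedAddCommGroup E] [NormedSpace ℝ E]
    {L : E → ℝ} {y : E} (hL : ConvexOn ℝ univ L) (hy : HasFDerivAt L (0 : E →L[ℝ] ℝ) y)
    (x : E) : L y ≤ L x := by
  set ψ : ℝ → ℝ := L ∘ AffineMap.lineMap y x
  have hψ : ConvexOn ℝ univ ψ := by
    simpa only [preimage_univ] using hL.comp_affineMap (AffineMap.lineMap y x)
  have hline : HasDerivAt (AffineMap.lineMap y x : ℝ → E) (x - y) 0 := by
    simpa using AffineMap.hasDerivAt_lineMap (a := y) (b := x) (x := (0 : ℝ))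
  have hψ' : HasDerivAt ψ 0 0 := by
    simpa using (AffineMap.lineMap_apply_zero (k := ℝ) y x ▸ hy).comp_hasDerivAt 0 hline
  have hslope := hψ.le_slope_of_hasDerivAt (mem_univ 0) (mem_univ 1) one_pos hψ'
  simpa [ψ, slope_def_field] using hslope

section PenaltyTerms

variable {a ρ t : ℝ}

theorem mul_le_mul_abs_of_abs_le (h : |a| ≤ ρ) : a * t ≤ ρ * |t| :=
  calc a * t ≤ |a| * |t| := abs_mul a t ▸ le_abs_self _
    _ ≤ ρ * |t| := mul_le_mul_of_nonneg_right h (abs_nonneg t)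

theorem mul_lt_mul_abs_of_abs_lt (h : |a| < ρ) (ht : t ≠ 0) : a * t < ρ * |t| :=
  calc a * t ≤ |a| * |t| := abs_mul a t ▸ le_abs_self _
    _ < ρ * |t| := mul_lt_mul_of_pos_right h (abs_pos.2 ht)

theorem mul_le_mul_max_zero_of_le (ha : 0 ≤ a) (h : a ≤ ρ) : a * t ≤ ρ * max 0 t := by
  rcases le_or_gt t 0 with ht | ht
  · rw [max_eq_left ht, mul_zero]
    exact mul_nonpos_of_nonneg_of_nonpos ha ht
  · rw [max_eq_right ht.le]
    exact mul_le_mul_of_nonneg_right h ht.le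

theorem mul_lt_mul_max_zero_of_lt (h : a < ρ) (ht : 0 < t) : a * t < ρ * max 0 t := by
  rw [max_eq_right ht.le]
  exact mul_lt_mul_of_pos_right h ht

end PenaltyTerms

namespace Finset

variable {ι : Type*} {s : Finset ι} {a u : ι → ℝ} {ρ : ℝ}

theorem forall_of_sum_eq_sum_of_le_of_lt {M : Type*} [AddCommMonoid M] [PartialOrder M]
    [IsOrderedCancelAddMonoid M] {f g : ι → M} {p : ι → Prop} (hle : ∀ i ∈ s, f i ≤ g i)
    (hlt : ∀ i ∈ s, ¬p i → f i < g i) (heq : ∑ i ∈ s, f i = ∑ i ∈ s, g i) : ∀ i ∈ s, p i :=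
  fun i hi => by_contra fun hp => (hlt i hi hp).ne ((sum_eq_sum_iff_of_le hle).1 heq i hi)

theorem sum_mul_le_mul_sum_abs (ha : ∀ i ∈ s, |a i| ≤ ρ) :
    ∑ i ∈ s, a i * u i ≤ ρ * ∑ i ∈ s, |u i| := by
  rw [mul_sum]
  exact sum_le_sum fun i hi => mul_le_mul_abs_of_abs_le (ha i hi)

theorem eq_zero_of_sum_mul_eq_mul_sum_abs (ha : ∀ i ∈ s, |a i| < ρ)
    (heq : ∑ i ∈ s, a i * u i = ρ * ∑ i ∈ s, |u i|) : ∀ i ∈ s, u i = 0 := by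
  rw [mul_sum] at heq
  exact forall_of_sum_eq_sum_of_le_of_lt (fun i hi => mul_le_mul_abs_of_abs_le (ha i hi).le)
    (fun i hi hu => mul_lt_mul_abs_of_abs_lt (ha i hi) hu) heq

theorem sum_mul_le_mul_sum_max_zero (ha₀ : ∀ i ∈ s, 0 ≤ a i) (ha : ∀ i ∈ s, a i ≤ ρ) :
    ∑ i ∈ s, a i * u i ≤ ρ * ∑ i ∈ s, max 0 (u i) := by
  rw [mul_sum]
  exact sum_le_sum fun i hi => mul_le_mul_max_zero_of_le (ha₀ i hi) (ha i hi)

theorem nonpos_of_sum_mul_eq_mul_sum_max_zero (ha₀ : ∀ i ∈ s, 0 ≤ a i) (ha : ∀ i ∈ s, a i < ρ)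
    (heq : ∑ i ∈ s, a i * u i = ρ * ∑ i ∈ s, max 0 (u i)) : ∀ i ∈ s, u i ≤ 0 := by
  rw [mul_sum] at heq
  exact forall_of_sum_eq_sum_of_le_of_lt
    (fun i hi => mul_le_mul_max_zero_of_le (ha₀ i hi) (ha i hi).le)
    (fun i hi hu => mul_lt_mul_max_zero_of_lt (ha i hi) (not_le.1 hu)) heq

end Finset

theorem forall_le_and_eq_of_touching_minorant {X β : Type*} [PartialOrder β] {L E : X → β}
    {y : X} (hLE : ∀ x, L x ≤ E x) (hLy : ∀ x, L y ≤ L x) (hEy : E y = L y) :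
    (∀ x, E y ≤ E x) ∧ ∀ z, (∀ x, E z ≤ E x) → E z = L z :=
  ⟨fun x => hEy ▸ (hLy x).trans (hLE x),
    fun z hz => le_antisymm (calc E z ≤ E y := hz y
      _ = L y := hEy
      _ ≤ L z := hLy z) (hLE z)⟩

section Lagrangian

variable {E ι κ : Type*} [NormedAddCommGroup E] [NormedSpace ℝ E] [Fintype ι] [Fintype κ]
  {f : E → ℝ} {g : ι → E →ᵃ[ℝ] ℝ} {h : κ → E → ℝ} {lam : ι → ℝ} {mu : κ → ℝ}

theorem convexOn_lagrangian (hf : ConvexOn ℝ univ f) (hh : ∀ j, ConvexOn ℝ univ (h j))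
    (hmu : ∀ j, 0 ≤ mu j) :
    ConvexOn ℝ univ fun x => f x + ∑ i, lam i * g i x + ∑ j, mu j * h j x :=
  (hf.add (ConvexOn.fun_sum convex_univ fun i _ => (lam i • g i).convexOn convex_univ)).add
    (ConvexOn.fun_sum convex_univ fun j _ => (hh j).smul (hmu j))

theorem differentiable_lagrangian [FiniteDimensional ℝ E] (hf : Differentiable ℝ f)
    (hh : ∀ j, Differentiable ℝ (h j)) :
    Differentiable ℝ fun x => f x + ∑ i, lam i * g i x + ∑ j, mu j * h j x := by
  have hg := fun i => (g i).differentiable_of_finiteDimensional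
  fun_prop

end Lagrangian

theorem exact_penalty_minimizer_iff_constrained_solution
    {n r s : ℕ}
    (f : EuclideanSpace ℝ (Fin n) → ℝ)
    (hf : ConvexOn ℝ Set.univ f) (hfd : Differentiable ℝ f)
    (g : Fin r → (EuclideanSpace ℝ (Fin n) →ᵃ[ℝ] ℝ))
    (h : Fin s → EuclideanSpace ℝ (Fin n) → ℝ)
    (hh : ∀ j, ConvexOn ℝ Set.univ (h j)) (hhd : ∀ j, Differentiable ℝ (h j))
    (lam : Fin r → ℝ) (mu : Fin s → ℝ) (hmu : ∀ j, 0 ≤ mu j)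
    (L : EuclideanSpace ℝ (Fin n) → ℝ)
    (hL : ∀ x, L x = f x + ∑ i, lam i * g i x + ∑ j, mu j * h j x)
    (E : EuclideanSpace ℝ (Fin n) → ℝ)
    (ρ : ℝ) (hρ : ∀ i, |lam i| < ρ) (hρ' : ∀ j, mu j < ρ)
    (hE : ∀ x, E x = f x + ρ * ∑ i, |g i x| + ρ * ∑ j, max 0 (h j x))
    (y : EuclideanSpace ℝ (Fin n))
    (hyfeas : (∀ i, g i y = 0) ∧ (∀ j, h j y ≤ 0))
    (hstat : gradient L y = 0)
    (hslack : ∀ j, mu j * h j y = 0) :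
    (∀ x, E y ≤ E x) ∧
      (∀ z, (∀ x, E z ≤ E x) →
        ((∀ i, g i z = 0) ∧ (∀ j, h j z ≤ 0) ∧
          ∀ w, (∀ i, g i w = 0) → (∀ j, h j w ≤ 0) → f z ≤ f w)) := by
  obtain ⟨hgy, hhy⟩ := hyfeas
  have hE_feasible : ∀ w, (∀ i, g i w = 0) → (∀ j, h j w ≤ 0) → E w = f w :=
    fun w hgw hhw => by simp [hE, hgw, max_eq_left (hhw _)]
  have habs x := Finset.sum_mul_le_mul_sum_abs (s := .univ) (u := fun i => g i x)
    fun i _ => (hρ i).le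
  have hmax x := Finset.sum_mul_le_mul_sum_max_zero (s := .univ) (u := fun j => h j x)
    (fun j _ => hmu j) fun j _ => (hρ' j).le
  have hLE x : L x ≤ E x := by
    rw [hL, hE]
    linarith [habs x, hmax x]
  have hL_eq : L = _ := funext hL
  have hLmin : ∀ x, L y ≤ L x := by
    refine (hL_eq ▸ convexOn_lagrangian hf hh hmu).le_of_hasFDerivAt_eq_zero ?_
    have hLd := ((hL_eq ▸ differentiable_lagrangian hfd hhd) y).hasGradientAt.hasFDerivAt
    rwa [hstat, map_zero] at hLd
  obtain ⟨hEmin, hE_eq_L⟩ := forall_le_and_eq_of_touching_minorant hLE hLmin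
    (by rw [hE_feasible y hgy hhy, hL]; simp [hgy, hslack])
  refine ⟨hEmin, fun z hz => ?_⟩
  have hz_eq := hE_eq_L z hz
  rw [hL, hE] at hz_eq
  have hgz i := Finset.eq_zero_of_sum_mul_eq_mul_sum_abs (fun i _ => hρ i)
    (by linarith [habs z, hmax z]) i (Finset.mem_univ i)
  have hhz j := Finset.nonpos_of_sum_mul_eq_mul_sum_max_zero (fun j _ => hmu j)
    (fun j _ => hρ' j) (by linarith [habs z, hmax z]) j (Finset.mem_univ j)
  refine ⟨hgz, hhz, fun w hgw hhw => ?_⟩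
  rw [← hE_feasible z hgz hhz, ← hE_feasible w hgw hhw]
  exact hz w
end

section
/- The posynomial f(y) = Σ_{α ∈ S} c_α exp(αᵗ y) (S finite, all c_α > 0) is coercive if and only if the polar cone {z ∈ ℝ^n : zᵗα ≤ 0 for all α ∈ S} reduces to {0}. -/
/-!
If a nonzero `z` lies in the polar cone, every exponent `⟪α, t • z⟫` is `≤ 0` for `t ≥ 0`, so `f`
stays below `∑ c_α` along the ray `t • z` and cannot be coercive. Conversely, if the polar cone is
trivial, the positively homogeneous function `g x = ∑ c_α max ⟪α, x⟫ 0` is positive on the unit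
sphere, hence bounded below there by some `ε > 0` by compactness; so `ε ‖x‖ ≤ g x ≤ f x`,
using `max t 0 ≤ exp t`.
-/

open scoped RealInnerProductSpace

/-- `F` is coercive: `F x → ∞` as `‖x‖ → ∞`. -/
def Coercive {n : ℕ} (F : EuclideanSpace ℝ (Fin n) → ℝ) : Prop :=
  ∀ M : ℝ, ∃ R : ℝ, ∀ x, R ≤ ‖x‖ → M ≤ F x

section InnerProductSpace

variable {E : Type*} [NormedAddCommGroup E] [InnerProductSpace ℝ E]

lemma sum_mul_exp_inner_smul_le_sum {S : Finset E} {c : E → ℝ} (hc : ∀ α ∈ S, 0 ≤ c α)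
    {z : E} (hz : ∀ α ∈ S, ⟪z, α⟫ ≤ 0) {t : ℝ} (ht : 0 ≤ t) :
    ∑ α ∈ S, c α * Real.exp ⟪α, t • z⟫ ≤ ∑ α ∈ S, c α := by
  refine Finset.sum_le_sum fun α hα => mul_le_of_le_one_right (hc α hα) ?_
  rw [Real.exp_le_one_iff, real_inner_smul_right, real_inner_comm]
  exact mul_nonpos_of_nonneg_of_nonpos ht (hz α hα)

lemma max_le_exp (t : ℝ) : max t 0 ≤ Real.exp t :=
  max_le (by linarith [Real.add_one_le_exp t]) (Real.exp_pos t).le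

lemma sum_mul_max_inner_le_sum_mul_exp_inner {S : Finset E} {c : E → ℝ}
    (hc : ∀ α ∈ S, 0 ≤ c α) (x : E) :
    ∑ α ∈ S, c α * max ⟪α, x⟫ 0 ≤ ∑ α ∈ S, c α * Real.exp ⟪α, x⟫ :=
  Finset.sum_le_sum fun α hα => mul_le_mul_of_nonneg_left (max_le_exp _) (hc α hα)

lemma sum_mul_max_inner_smul (S : Finset E) (c : E → ℝ) (x : E) {t : ℝ} (ht : 0 ≤ t) :
    ∑ α ∈ S, c α * max ⟪α, t • x⟫ 0 = t * ∑ α ∈ S, c α * max ⟪α, x⟫ 0 := by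
  rw [Finset.mul_sum]
  refine Finset.sum_congr rfl fun α _ => ?_
  rw [real_inner_smul_right, ← mul_zero t, ← mul_max_of_nonneg _ _ ht, mul_zero]
  ring

lemma exists_pos_mul_norm_le_sum_mul_max_inner [ProperSpace E] {S : Finset E} {c : E → ℝ}
    (hc : ∀ α ∈ S, 0 < c α) (hS : ∀ z, (∀ α ∈ S, ⟪z, α⟫ ≤ 0) → z = 0) :
    ∃ ε > 0, ∀ x, ε * ‖x‖ ≤ ∑ α ∈ S, c α * max ⟪α, x⟫ 0 := by
  set g : E → ℝ := fun x => ∑ α ∈ S, c α * max ⟪α, x⟫ 0 with hg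
  have hg_cont : Continuous g := by fun_prop
  have hg_pos : ∀ u ∈ Metric.sphere (0 : E) 1, 0 < g u := by
    intro u hu
    by_contra! hgu
    have hu0 : u = 0 := hS u fun α hα => by
      have hterm : c α * max ⟪α, u⟫ 0 ≤ g u := Finset.single_le_sum
        (f := fun α => c α * max ⟪α, u⟫ 0)
        (fun β hβ => mul_nonneg (hc β hβ).le (le_max_right _ _)) hα
      have hmax : max ⟪α, u⟫ 0 ≤ 0 :=
        nonpos_of_mul_nonpos_right (hterm.trans hgu) (hc α hα)
      rw [real_inner_comm]
      exact (le_max_left _ _).trans hmax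
    simp [hu0] at hu
  obtain ⟨ε, hε, hεg⟩ :=
    (isCompact_sphere (0 : E) 1).exists_forall_le' hg_cont.continuousOn hg_pos
  refine ⟨ε, hε, fun x => ?_⟩
  rcases eq_or_ne x 0 with rfl | hx
  · simp only [norm_zero, mul_zero]
    exact Finset.sum_nonneg fun α hα => mul_nonneg (hc α hα).le (le_max_right _ _)
  have hx_norm : 0 < ‖x‖ := norm_pos_iff.mpr hx
  have hu : ‖x‖⁻¹ • x ∈ Metric.sphere (0 : E) 1 := by
    simp [norm_smul, hx_norm.ne']
  calc ε * ‖x‖ ≤ g (‖x‖⁻¹ • x) * ‖x‖ := mul_le_mul_of_nonneg_right (hεg _ hu) hx_norm.le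
    _ = g x := by
      simp only [hg]
      rw [sum_mul_max_inner_smul S c x (inv_nonneg.mpr hx_norm.le)]
      field_simp

end InnerProductSpace

section Coercive

variable {n : ℕ} {F : EuclideanSpace ℝ (Fin n) → ℝ}

lemma Coercive.exists_lt_apply_smul (hF : Coercive F) {z : EuclideanSpace ℝ (Fin n)}
    (hz : z ≠ 0) (B : ℝ) : ∃ t : ℝ, 0 ≤ t ∧ B < F (t • z) := by
  obtain ⟨R, hR⟩ := hF (B + 1)
  have hz_norm : 0 < ‖z‖ := norm_pos_iff.mpr hz
  have ht : 0 ≤ max R 0 / ‖z‖ := div_nonneg (le_max_right R 0) hz_norm.le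
  refine ⟨max R 0 / ‖z‖, ht, ?_⟩
  have hnorm : ‖(max R 0 / ‖z‖) • z‖ = max R 0 := by
    rw [norm_smul, Real.norm_of_nonneg ht]
    field_simp
  linarith [hR _ (hnorm ▸ le_max_left R 0)]

lemma coercive_of_mul_norm_le {ε : ℝ} (hε : 0 < ε) (h : ∀ x, ε * ‖x‖ ≤ F x) : Coercive F :=
  fun M => ⟨M / ε, fun x hx => ((div_le_iff₀' hε).mp hx).trans (h x)⟩

end Coercive

theorem posynomial_coercive_iff_polar_cone_trivial
    {n : ℕ} (S : Finset (EuclideanSpace ℝ (Fin n)))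
    (c : EuclideanSpace ℝ (Fin n) → ℝ) (hc : ∀ α ∈ S, 0 < c α)
    (f : EuclideanSpace ℝ (Fin n) → ℝ)
    (hf : ∀ y, f y = ∑ α ∈ S, c α * Real.exp ⟪α, y⟫) :
    Coercive f ↔
      {z : EuclideanSpace ℝ (Fin n) | ∀ α ∈ S, ⟪z, α⟫ ≤ 0} = {0} := by
  have hc_nonneg : ∀ α ∈ S, 0 ≤ c α := fun α hα => (hc α hα).le
  rw [Set.eq_singleton_iff_unique_mem]
  simp only [Set.mem_ofPred_eq, inner_zero_left, le_refl, implies_true, true_and]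
  constructor
  · intro hf_coercive z hz
    by_contra hz0
    obtain ⟨t, ht, hlt⟩ := hf_coercive.exists_lt_apply_smul hz0 (∑ α ∈ S, c α)
    rw [hf] at hlt
    exact hlt.not_ge (sum_mul_exp_inner_smul_le_sum hc_nonneg hz ht)
  · intro hpolar
    obtain ⟨ε, hε, hbound⟩ := exists_pos_mul_norm_le_sum_mul_max_inner hc hpolar
    exact coercive_of_mul_norm_le hε fun x =>
      (hbound x).trans ((sum_mul_max_inner_le_sum_mul_exp_inner hc_nonneg x).trans (hf x).ge)
end
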